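/- arXiv:1409.3928 — 4 statements merged into one kernel-verified Lean document; each statement's English description precedes it below -/
import Mathlib

section
/- The point (S_h2, I_h2, R_h2, S_m2, I_m2) with S_h2 = N_h²(B β_hm μ_h + μ_m(η_h+μ_h)) / (B β_hm (B β_mh N_m + μ_h N_h)), I_h2 = −μ_h N_h (μ_m N_h(η_h+μ_h) − B² β_hm β_mh N_m) / (B β_hm (η_h+μ_h)(B β_mh N_m + μ_h N_h)), R_h2 = −η_h N_h (μ_m N_h(η_h+μ_h) − B² β_hm β_mh N_m) / (B β_hm (η_h+μ_h)(B β_mh N_m + μ_h N_h)), S_m2 = μ_m(η_h+μ_h)(B β_mh N_m + μ_h N_h) / (B β_mh (B β_hm μ_h + μ_m(η_h+μ_h))), I_m2 = −μ_h (μ_m N_h(η_h+μ_h) − B² β_hm β_mh N_m) / (B β_mh (B β_hm μ_h + μ_m(η_h+μ_h))) is an equilibrium of the dengue ODE system, i.e., all five right-hand sides vanish at this point. -/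
/-- The endemic point `(S_h2, I_h2, R_h2, S_m2, I_m2)` is an equilibrium of the
dengue ODE system: all five right-hand sides vanish there. -/
theorem endemic_equilibrium
    (B βmh βhm μh μm ηh Nh Nm : ℝ)
    (hB : 0 < B) (hβmh : 0 < βmh) (hβhm : 0 < βhm)
    (hμh : 0 < μh) (hμm : 0 < μm) (hηh : 0 < ηh)
    (hNh : 0 < Nh) (hNm : 0 < Nm)
    (Sh2 Ih2 Rh2 Sm2 Im2 : ℝ)
    (hSh2 : Sh2 = Nh ^ 2 * (B * βhm * μh + μm * (ηh + μh)) /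
      (B * βhm * (B * βmh * Nm + μh * Nh)))
    (hIh2 : Ih2 = -(μh * Nh * (μm * Nh * (ηh + μh) - B ^ 2 * βhm * βmh * Nm)) /
      (B * βhm * (ηh + μh) * (B * βmh * Nm + μh * Nh)))
    (hRh2 : Rh2 = -(ηh * Nh * (μm * Nh * (ηh + μh) - B ^ 2 * βhm * βmh * Nm)) /
      (B * βhm * (ηh + μh) * (B * βmh * Nm + μh * Nh)))
    (hSm2 : Sm2 = μm * (ηh + μh) * (B * βmh * Nm + μh * Nh) /
      (B * βmh * (B * βhm * μh + μm * (ηh + μh))))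
    (hIm2 : Im2 = -(μh * (μm * Nh * (ηh + μh) - B ^ 2 * βhm * βmh * Nm)) /
      (B * βmh * (B * βhm * μh + μm * (ηh + μh)))) :
    μh * Nh - (B * βmh * Im2 / Nh + μh) * Sh2 = 0 ∧
    B * βmh * (Im2 / Nh) * Sh2 - (ηh + μh) * Ih2 = 0 ∧
    ηh * Ih2 - μh * Rh2 = 0 ∧
    μm * Nm - (B * βhm * Ih2 / Nh + μm) * Sm2 = 0 ∧
    B * βhm * (Ih2 / Nh) * Sm2 - μm * Im2 = 0 := by
  have h1 : B * βhm * (B * βmh * Nm + μh * Nh) ≠ 0 := by positivity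
  have h2 : B * βhm * (ηh + μh) * (B * βmh * Nm + μh * Nh) ≠ 0 := by positivity
  have h3 : B * βmh * (B * βhm * μh + μm * (ηh + μh)) ≠ 0 := by positivity
  have hNh' : Nh ≠ 0 := ne_of_gt hNh
  subst hSh2 hIh2 hRh2 hSm2 hIm2
  refine ⟨?_, ?_, ?_, ?_, ?_⟩ <;> (field_simp; ring)
end

section
/- The infected-component coordinates of the endemic equilibrium are positive if and only if R₀ > 1, where R₀ = sqrt(B² β_hm β_mh N_m / ((η_h + μ_h) μ_m N_h)): specifically, I_h2 > 0 ⟺ R₀ > 1, where I_h2 = −μ_h N_h (μ_m N_h(η_h+μ_h) − B² β_hm β_mh N_m) / (B β_hm (η_h+μ_h)(B β_mh N_m + μ_h N_h)). -/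
/-- The infected human component of the endemic equilibrium is positive
iff the basic reproduction number exceeds one. -/
theorem endemic_infected_pos_iff_R0_gt_one
    (B βmh βhm μh μm ηh Nh Nm : ℝ)
    (hB : 0 < B) (hβmh : 0 < βmh) (hβhm : 0 < βhm)
    (hμh : 0 < μh) (hμm : 0 < μm) (hηh : 0 < ηh)
    (hNh : 0 < Nh) (hNm : 0 < Nm)
    (R0 Ih2 : ℝ)
    (hR0 : R0 = Real.sqrt (B ^ 2 * βhm * βmh * Nm / ((ηh + μh) * μm * Nh)))
    (hIh2 : Ih2 = -(μh * Nh * (μm * Nh * (ηh + μh) - B ^ 2 * βhm * βmh * Nm)) /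
      (B * βhm * (ηh + μh) * (B * βmh * Nm + μh * Nh))) :
    0 < Ih2 ↔ 1 < R0 := by
  have hden : 0 < B * βhm * (ηh + μh) * (B * βmh * Nm + μh * Nh) := by positivity
  have hd2 : 0 < (ηh + μh) * μm * Nh := by positivity
  have key : μm * Nh * (ηh + μh) < B ^ 2 * βhm * βmh * Nm ↔ 1 < R0 := by
    rw [hR0, show (1 : ℝ) = Real.sqrt 1 by simp]
    rw [Real.sqrt_lt_sqrt_iff (by norm_num), lt_div_iff₀ hd2, one_mul]
    constructor <;> intro h <;> nlinarith [mul_pos hμh hNh]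
  rw [← key, hIh2, div_pos_iff]
  constructor
  · rintro (⟨h1, _⟩ | ⟨_, h2⟩)
    · nlinarith [mul_pos hμh hNh]
    · exact absurd h2 (not_lt.2 hden.le)
  · intro h
    left
    constructor
    · nlinarith [mul_pos hμh hNh]
    · exact hden
end

section
/- If R₀ < 1, then the disease-free equilibrium of the dengue system is locally asymptotically stable: all eigenvalues of the Jacobian matrix of the system evaluated at (N_h, 0, 0, N_m, 0) have negative real parts. -/
/-!
Expanding `det (t - J)` along the decoupled `S_h`, `R_h`, `S_m` directions gives
`(t + μh)² (t + μm) q(t)` with `q(t) = t² + (ηh + μh + μm) t + (ηh + μh) μm - b c`, where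
`b = B βmh` and `c = B βhm Nm / Nh` are the two transmission entries. Since
`R₀² = b c / ((ηh + μh) μm)`, the hypothesis `R₀ < 1` says exactly that the constant term of `q`
is positive, and a real monic quadratic with positive coefficients has its roots in the open left
half-plane (Routh–Hurwitz in degree two).
-/

open Matrix

theorem Complex.re_neg_of_sq_add_mul_add_eq_zero {b c : ℝ} (hb : 0 < b) (hc : 0 < c) {z : ℂ}
    (h : z ^ 2 + b * z + c = 0) : z.re < 0 := by
  have hre : z.re ^ 2 - z.im ^ 2 + b * z.re + c = 0 := by
    simpa [sq] using congrArg Complex.re h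
  have him : z.im * (2 * z.re + b) = 0 := by
    have := congrArg Complex.im h
    simp only [sq, Complex.add_im, Complex.mul_im, Complex.ofReal_re, Complex.ofReal_im,
      Complex.zero_im] at this
    linear_combination this
  rcases mul_eq_zero.1 him with him0 | hre_half
  · rw [him0] at hre
    nlinarith
  · linarith

theorem Real.lt_of_sqrt_div_lt_one {x k : ℝ} (hk : 0 < k) (h : √(x / k) < 1) : x < k :=
  (div_lt_one hk).1 (by simpa using (Real.sqrt_lt' one_pos).1 h)

/-- The Jacobian at the disease-free equilibrium, in the coordinates `(S_h, I_h, R_h, S_m, I_m)`. -/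
def dengueJacobian {R : Type*} [Ring R] (μh μm ηh b c : R) : Matrix (Fin 5) (Fin 5) R :=
  !![-μh, 0, 0, 0, -b;
     0, -(ηh + μh), 0, 0, b;
     0, ηh, -μh, 0, 0;
     0, -c, 0, -μm, 0;
     0, c, 0, 0, -μm]

section

variable {R : Type*} [CommRing R]

theorem dengueJacobian_map {S : Type*} [CommRing S] (f : R →+* S) (μh μm ηh b c : R) :
    (dengueJacobian μh μm ηh b c).map f = dengueJacobian (f μh) (f μm) (f ηh) (f b) (f c) := by
  ext i j
  fin_cases i <;> fin_cases j <;> simp [dengueJacobian]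

theorem det_scalar_sub_dengueJacobian (t μh μm ηh b c : R) :
    (scalar (Fin 5) t - dengueJacobian μh μm ηh b c).det =
      (t + μh) ^ 2 * (t + μm) * (t ^ 2 + (ηh + μh + μm) * t + ((ηh + μh) * μm - b * c)) := by
  simp only [scalar_apply, dengueJacobian, neg_add_rev, det_succ_row_zero, Nat.succ_eq_add_one,
    Nat.reduceAdd, Fin.isValue, Matrix.sub_apply, of_apply, cons_val', cons_val_fin_one, cons_val_zero,
    submatrix_apply, Fin.succ_zero_eq_one, Fin.succAbove, cons_val_one, submatrix_submatrix,
    Function.comp_apply, Fin.succ_one_eq_two, cons_val, Fin.reduceSucc, det_unique,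
    Fin.default_eq_zero, Fin.castSucc_zero, Fin.sum_univ_succ, Fin.coe_ofNat_eq_mod, Nat.zero_mod,
    pow_zero, one_mul, lt_self_iff_false, ↓reduceIte, Fin.castSucc_one, Finset.univ_unique,
    Fin.val_succ, Fin.val_eq_zero, zero_add, pow_one, Fin.castSucc_succ, neg_mul, neg_sub, Fin.succ_pos,
    Finset.sum_singleton, not_lt_zero, Fin.reduceCastSucc, even_two, Even.neg_pow, one_pow,
    Fin.reduceLT, Fin.lt_one_iff, Fin.reduceEq, diagonal_apply_eq, sub_neg_eq_add, ne_eq,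
    not_false_eq_true, diagonal_apply_ne, sub_self, mul_zero, add_zero, zero_mul, zero_sub, mul_neg,
    neg_zero, neg_neg, cons_val_succ, one_ne_zero, Finset.sum_const_zero]
  ring

end

theorem re_neg_of_mem_spectrum_dengueJacobian {μh μm ηh b c : ℝ} (hμh : 0 < μh) (hμm : 0 < μm)
    (hημ : 0 < ηh + μh) (hbc : b * c < (ηh + μh) * μm) {z : ℂ}
    (hz : z ∈ spectrum ℂ ((dengueJacobian μh μm ηh b c).map Complex.ofReal)) : z.re < 0 := by
  rw [mem_spectrum_iff_isRoot_charpoly, Polynomial.IsRoot, eval_charpoly,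
    show (Complex.ofReal : ℝ → ℂ) = Complex.ofRealHom from rfl, dengueJacobian_map,
    det_scalar_sub_dengueJacobian] at hz
  rcases mul_eq_zero.1 hz with hz | hq
  · rcases mul_eq_zero.1 hz with hz | hz
    · have : z = -μh := eq_neg_of_add_eq_zero_left (pow_eq_zero_iff two_ne_zero |>.1 hz)
      simpa [this] using hμh
    · simpa [eq_neg_of_add_eq_zero_left hz] using hμm
  · refine Complex.re_neg_of_sq_add_mul_add_eq_zero (b := ηh + μh + μm)
      (c := (ηh + μh) * μm - b * c) (by linarith) (by linarith) ?_
    push_cast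
    linear_combination hq

theorem disease_free_locally_stable_general
    (B βmh βhm μh μm ηh Nh Nm : ℝ)
    (hμh : 0 < μh) (hμm : 0 < μm) (hηh : 0 < ηh)
    (hR0 : Real.sqrt (B ^ 2 * βhm * βmh * Nm / ((ηh + μh) * μm * Nh)) < 1)
    (J : Matrix (Fin 5) (Fin 5) ℝ)
    (hJ : J = !![-μh, 0, 0, 0, -(B * βmh);
                 0, -(ηh + μh), 0, 0, B * βmh;
                 0, ηh, -μh, 0, 0;
                 0, -(B * βhm * Nm / Nh), 0, -μm, 0;
                 0, B * βhm * Nm / Nh, 0, 0, -μm]) :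
    ∀ z ∈ spectrum ℂ (J.map (Complex.ofReal)), z.re < 0 := by
  rw [div_mul_eq_div_div] at hR0
  have hbc : B * βmh * (B * βhm * Nm / Nh) < (ηh + μh) * μm :=
    Real.lt_of_sqrt_div_lt_one (by positivity) (by convert hR0 using 2; ring)
  obtain rfl : J = dengueJacobian μh μm ηh (B * βmh) (B * βhm * Nm / Nh) := hJ
  exact fun z hz => re_neg_of_mem_spectrum_dengueJacobian hμh hμm (by positivity) hbc hz

/-- If `R₀ < 1`, every eigenvalue of the Jacobian of the dengue system at the
disease-free equilibrium `(N_h, 0, 0, N_m, 0)` has negative real part. -/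
theorem disease_free_locally_stable
    (B βmh βhm μh μm ηh Nh Nm : ℝ)
    (hB : 0 < B) (hβmh : 0 < βmh) (hβhm : 0 < βhm)
    (hμh : 0 < μh) (hμm : 0 < μm) (hηh : 0 < ηh)
    (hNh : 0 < Nh) (hNm : 0 < Nm)
    (hR0 : Real.sqrt (B ^ 2 * βhm * βmh * Nm / ((ηh + μh) * μm * Nh)) < 1)
    (J : Matrix (Fin 5) (Fin 5) ℝ)
    (hJ : J = !![-μh, 0, 0, 0, -(B * βmh);
                 0, -(ηh + μh), 0, 0, B * βmh;
                 0, ηh, -μh, 0, 0;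
                 0, -(B * βhm * Nm / Nh), 0, -μm, 0;
                 0, B * βhm * Nm / Nh, 0, 0, -μm]) :
    ∀ z ∈ spectrum ℂ (J.map (Complex.ofReal)), z.re < 0 :=
  disease_free_locally_stable_general B βmh βhm μh μm ηh Nh Nm hμh hμm hηh hR0 J hJ
end

section
/- If R₀ > 1, then the disease-free equilibrium is unstable: the Jacobian matrix of the dengue system at (N_h, 0, 0, N_m, 0) has an eigenvalue with positive real part. -/
set_option maxHeartbeats 1000000 in
/-- If `R₀ > 1`, the Jacobian of the dengue system at the disease-free
equilibrium `(N_h, 0, 0, N_m, 0)` has an eigenvalue with positive real part. -/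
theorem disease_free_unstable
    (B βmh βhm μh μm ηh Nh Nm : ℝ)
    (hB : 0 < B) (hβmh : 0 < βmh) (hβhm : 0 < βhm)
    (hμh : 0 < μh) (hμm : 0 < μm) (hηh : 0 < ηh)
    (hNh : 0 < Nh) (hNm : 0 < Nm)
    (hR0 : 1 < Real.sqrt (B ^ 2 * βhm * βmh * Nm / ((ηh + μh) * μm * Nh)))
    (J : Matrix (Fin 5) (Fin 5) ℝ)
    (hJ : J = !![-μh, 0, 0, 0, -(B * βmh);
                 0, -(ηh + μh), 0, 0, B * βmh;
                 0, ηh, -μh, 0, 0;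
                 0, -(B * βhm * Nm / Nh), 0, -μm, 0;
                 0, B * βhm * Nm / Nh, 0, 0, -μm]) :
    ∃ z ∈ spectrum ℂ (J.map (Complex.ofReal)), 0 < z.re := by
  set a : ℝ := ηh + μh with ha
  set c : ℝ := B * βmh with hc
  set b : ℝ := B * βhm * Nm / Nh with hb
  have ha0 : 0 < a := by positivity
  have hb0 : 0 < b := by positivity
  have hc0 : 0 < c := by positivity
  -- R₀ > 1 gives b * c > a * μm
  have hbc : a * μm < b * c := by
    have hXpos : 0 ≤ B ^ 2 * βhm * βmh * Nm / ((ηh + μh) * μm * Nh) := by positivity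
    have hX : 1 < B ^ 2 * βhm * βmh * Nm / ((ηh + μh) * μm * Nh) := by
      nlinarith [Real.sq_sqrt hXpos, hR0,
        Real.sqrt_nonneg (B ^ 2 * βhm * βmh * Nm / ((ηh + μh) * μm * Nh))]
    rw [lt_div_iff₀ (by positivity)] at hX
    have hbcNh : b * c * Nh = B ^ 2 * βhm * βmh * Nm := by
      rw [hb, hc]; field_simp
    have h2 : a * μm * Nh < b * c * Nh := by rw [hbcNh, ha]; linarith
    exact lt_of_mul_lt_mul_right h2 hNh.le
  set D : ℝ := (a - μm) ^ 2 + 4 * (b * c) with hD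
  have hD0 : 0 ≤ D := by positivity
  set s : ℝ := Real.sqrt D with hs
  have hs2 : s ^ 2 = D := Real.sq_sqrt hD0
  set lam : ℝ := (-(a + μm) + s) / 2 with hlam
  have hlam_pos : 0 < lam := by
    have hlt : (a + μm) ^ 2 < D := by rw [hD]; nlinarith
    have h1 : a + μm < s := by
      rw [hs]; exact (Real.lt_sqrt (by positivity)).mpr hlt
    rw [hlam]; linarith
  have hs2' : s ^ 2 = (a - μm) ^ 2 + 4 * (b * c) := hs2.trans hD
  have hkey : (lam + a) * (lam + μm) = b * c := by
    rw [hlam]; linear_combination hs2' / 4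
  have hd1 : lam + μh ≠ 0 := by positivity
  have hd2 : lam + μm ≠ 0 := by positivity
  -- eigenvector
  set v : Fin 5 → ℝ :=
    ![-(c * (lam + a)) / (lam + μh), c, ηh * c / (lam + μh),
      -(b * c) / (lam + μm), lam + a] with hv
  have hvne : v ≠ 0 := by
    intro h
    have : v 1 = 0 := by rw [h]; rfl
    rw [hv] at this
    simp at this
    exact hc0.ne' this
  set K : Matrix (Fin 5) (Fin 5) ℝ := lam • (1 : Matrix (Fin 5) (Fin 5) ℝ) - J with hK
  have h2 : lam ^ 2 + lam * a + lam * μm + a * μm = b * c := by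
    linear_combination hkey
  have hJv : Matrix.mulVec J v = lam • v := by
    rw [hJ, hv]
    funext i
    match i with
    | 0 => simp [Matrix.mulVec, dotProduct, Fin.sum_univ_five]; field_simp; ring
    | 1 => simp [Matrix.mulVec, dotProduct, Fin.sum_univ_five]; ring
    | 2 => simp [Matrix.mulVec, dotProduct, Fin.sum_univ_five]; field_simp;
           linarith [h2]
    | 3 => simp [Matrix.mulVec, dotProduct, Fin.sum_univ_five]; field_simp;
           linarith [h2]
    | 4 => simp [Matrix.mulVec, dotProduct, Fin.sum_univ_five];
           linarith [h2]
  have hKv : Matrix.mulVec K v = 0 := by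
    rw [hK, Matrix.sub_mulVec, Matrix.smul_mulVec, Matrix.one_mulVec, hJv, sub_self]
  have hdet : K.det = 0 := by
    rw [← Matrix.exists_mulVec_eq_zero_iff]
    exact ⟨v, hvne, hKv⟩
  refine ⟨(lam : ℂ), ?_, by simpa using hlam_pos⟩
  rw [spectrum.mem_iff]
  have heq : algebraMap ℂ (Matrix (Fin 5) (Fin 5) ℂ) (lam : ℂ) -
      J.map Complex.ofReal = K.map Complex.ofReal := by
    ext i j
    by_cases h : i = j <;>
      simp [Matrix.algebraMap_eq_diagonal, Matrix.diagonal_apply, h, hK,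
        Matrix.map_apply, Matrix.sub_apply, Matrix.smul_apply, Matrix.one_apply]
  rw [heq]
  have hdet2 : (K.map Complex.ofReal).det = 0 := by
    have hmap : K.map Complex.ofReal = K.map Complex.ofRealHom := rfl
    rw [hmap, show K.map ⇑Complex.ofRealHom = Complex.ofRealHom.mapMatrix K from rfl,
      ← RingHom.map_det, hdet, map_zero]
  rw [Matrix.isUnit_iff_isUnit_det, hdet2]
  exact not_isUnit_zero
end
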